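/- For every D ⊆ E admitting a d-flow and every e ∈ E: the first two defining cases of φ_e are mutually exclusive (so φ_e is well defined); φ_e(D) admits a d-flow with A(φ_e(D)) = A(D); φ_e(D) contains exactly one of e and rev e; and φ_e(D) ∖ {e, rev e} = D ∖ {e, rev e}. -/

import Mathlib

open Finset

section Defs

variable {V : Type*}

/-- Reversal of a directed edge. -/
def drev (e : V × V) : V × V := (e.2, e.1)

/-- `K` is a subgraph of the (symmetric) edge set `E`: it contains either both or
neither of `e` and `drev e` for every `e ∈ E`. -/
def IsSubgraph [DecidableEq V] (E K : Finset (V × V)) : Prop :=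
  K ⊆ E ∧ ∀ e ∈ E, (e ∈ K ↔ drev e ∈ K)

/-- `L` is an orientation of the (symmetric) edge set `E`: it contains exactly one of
`e` and `drev e` for every `e ∈ E`. -/
def IsOrientation [DecidableEq V] (E L : Finset (V × V)) : Prop :=
  L ⊆ E ∧ ∀ e ∈ E, (e ∈ L ↔ drev e ∉ L)

variable [Fintype V] [DecidableEq V]

/-- `f` is a `d`-flow on the directed subgraph `D` of the graph with edge set `E`. -/
def IsFlow (E D : Finset (V × V)) (d : V → ℤ) (f : V × V → ℝ) : Prop :=
  (∀ e ∈ E, 0 ≤ f e ∧ f e ≤ 1) ∧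
  (∀ e, e ∉ D → f e = 0) ∧
  ∀ u : V,
    ((Finset.univ.filter (fun v : V => (u, v) ∈ E)).sum fun v => f (u, v)) -
      ((Finset.univ.filter (fun v : V => (v, u) ∈ E)).sum fun v => f (v, u)) = (d u : ℝ)

/-- A `d`-flow exists on `D`. -/
def AdmitsFlow (E D : Finset (V × V)) (d : V → ℤ) : Prop :=
  ∃ f : V × V → ℝ, IsFlow E D d f

/-- The `w`-cost of a flow `f`. -/
def flowCost (E : Finset (V × V)) (w : V × V → ℝ) (f : V × V → ℝ) : ℝ :=
  ∑ e ∈ E, w e * f e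

/-- `f` is a min-cost `d`-flow on `D`. -/
def IsMinCostFlow (E D : Finset (V × V)) (d : V → ℤ) (w : V × V → ℝ)
    (f : V × V → ℝ) : Prop :=
  IsFlow E D d f ∧ ∀ g : V × V → ℝ, IsFlow E D d g → flowCost E w f ≤ flowCost E w g

/-- The `{0,1}`-valued function determined by a set of edges. -/
def ind (S : Finset (V × V)) : V × V → ℝ := fun e => if e ∈ S then 1 else 0

/-- `A` assigns to every flow-admitting `D ⊆ E` the (edge set of the) unique,
`{0,1}`-valued min-cost `d`-flow on `D`. -/
def GoodA (E : Finset (V × V)) (d : V → ℤ) (w : V × V → ℝ)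
    (A : Finset (V × V) → Finset (V × V)) : Prop :=
  ∀ D : Finset (V × V), D ⊆ E → AdmitsFlow E D d →
    IsMinCostFlow E D d w (ind (A D)) ∧
    ∀ f : V × V → ℝ, IsMinCostFlow E D d w f → f = ind (A D)

/-- `A(D) = A(D')`: both `D` and `D'` admit a `d`-flow and their unique min-cost
`d`-flows coincide.  (If one of them admits no `d`-flow this is false.) -/
def AEq (E : Finset (V × V)) (d : V → ℤ) (A : Finset (V × V) → Finset (V × V))
    (D D' : Finset (V × V)) : Prop :=
  AdmitsFlow E D d ∧ AdmitsFlow E D' d ∧ A D = A D'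

/-- `D ⊕ e := (D ∪ {e}) \ {drev e}`. -/
def oplus (D : Finset (V × V)) (e : V × V) : Finset (V × V) := insert e D \ {drev e}

/-- `D + e := D ∪ {e, drev e}`. -/
def padd (D : Finset (V × V)) (e : V × V) : Finset (V × V) := D ∪ {e, drev e}

/-- `D − e := D \ {e, drev e}`. -/
def psub (D : Finset (V × V)) (e : V × V) : Finset (V × V) := D \ {e, drev e}

/-- The representative of `{e, drev e}` lying in the reference orientation `E'`. -/
def chi (E' : Finset (V × V)) (e : V × V) : V × V := if e ∈ E' then e else drev e

/-- The map `φ_e`. -/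
noncomputable def phiE (E : Finset (V × V)) (d : V → ℤ)
    (A : Finset (V × V) → Finset (V × V)) (E' : Finset (V × V))
    (e : V × V) (D : Finset (V × V)) : Finset (V × V) := by
  classical
  exact
    if ¬ AEq E d A D (oplus D e) then oplus D (drev e)
    else if ¬ AEq E d A D (oplus D (drev e)) then oplus D e
    else if e ∈ D then oplus D (chi E' e) else oplus D (drev (chi E' e))

/-- The map `ψ_e`. -/
noncomputable def psiE (E : Finset (V × V)) (d : V → ℤ)
    (A : Finset (V × V) → Finset (V × V)) (E' : Finset (V × V))
    (e : V × V) (D : Finset (V × V)) : Finset (V × V) := by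
  classical
  exact
    if ¬ AEq E d A D (padd D e) then psub D e
    else if ¬ AEq E d A D (psub D e) then padd D e
    else if chi E' e ∈ D then padd D e else psub D e

end Defs

/-!
A min-cost flow never uses both `e` and `drev e`: cancelling the two-cycle would save
`w e + w (drev e) > 0`. So if `A D` uses `e`, forbidding `drev e` changes nothing, and
symmetrically. If `A D` uses neither, yet `A (D ⊕ e)` and `A (D ⊕ drev e)` both differ from
`A D`, then these flows use `e` and `drev e` respectively (otherwise they would be feasible on
`D`, hence equal to `A D`), and half their sum with the two-cycle cancelled is a flow on `D`
strictly cheaper than `A D`. Hence `φ_e D` is `D ⊕ e` or `D ⊕ drev e` with the same min-cost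
flow as `D`, and the remaining claims are bookkeeping.
-/

section

variable {V : Type*}

@[simp] lemma drev_drev (e : V × V) : drev (drev e) = e := rfl

section Oplus

variable [DecidableEq V] {D : Finset (V × V)} {a : V × V}

lemma mem_oplus_self (ha : a ≠ drev a) : a ∈ oplus D a := by
  simp [oplus, ha]

lemma drev_notMem_oplus : drev a ∉ oplus D a := by
  simp [oplus]

lemma oplus_subset_of_mem (h : a ∈ D) : oplus D a ⊆ D :=
  sdiff_subset.trans (insert_subset h subset_rfl)

lemma oplus_subset {E : Finset (V × V)} (hD : D ⊆ E) (ha : a ∈ E) : oplus D a ⊆ E :=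
  sdiff_subset.trans (insert_subset ha hD)

lemma subset_oplus {S : Finset (V × V)} (hS : S ⊆ D) (h : drev a ∉ S) : S ⊆ oplus D a := by
  intro x hx
  simp only [oplus, mem_sdiff, mem_insert, mem_singleton]
  exact ⟨Or.inr (hS hx), fun hxa => h (hxa ▸ hx)⟩

lemma erase_oplus_subset : (oplus D a).erase a ⊆ D := by
  intro x hx
  simp only [oplus, mem_erase, mem_sdiff, mem_insert] at hx
  exact hx.2.1.resolve_left hx.1

lemma psub_drev : psub D (drev a) = psub D a := by
  simp only [psub, drev_drev, pair_comm]

lemma psub_oplus : psub (oplus D a) a = psub D a := by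
  ext x
  simp only [psub, oplus, mem_sdiff, mem_insert, mem_singleton]
  tauto

end Oplus

section Incidence

variable [DecidableEq V] {E S S₁ S₂ : Finset (V × V)} {w : V × V → ℝ} {e : V × V}

lemma ind_injective : Function.Injective (ind : Finset (V × V) → V × V → ℝ) := by
  intro S T h
  ext x
  have hx := congrFun h x
  by_cases hS : x ∈ S <;> by_cases hT : x ∈ T <;> simp_all [ind]

def incidence (x : V × V) (u : V) : ℝ :=
  (if x.1 = u then 1 else 0) - (if x.2 = u then 1 else 0)

lemma incidence_drev (x : V × V) (u : V) : incidence (drev x) u = - incidence x u :=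
  (neg_sub _ _).symm

lemma sum_mul_ind (hS : S ⊆ E) (k : V × V → ℝ) : ∑ x ∈ E, k x * ind S x = ∑ x ∈ S, k x := by
  simp only [ind, mul_ite, mul_one, mul_zero, sum_ite_mem, inter_eq_right.mpr hS]

noncomputable def avgInd (S₁ S₂ : Finset (V × V)) : V × V → ℝ := fun x => (ind S₁ x + ind S₂ x) / 2

lemma sum_mul_avgInd (hS₁ : S₁ ⊆ E) (hS₂ : S₂ ⊆ E) (k : V × V → ℝ) :
    ∑ x ∈ E, k x * avgInd S₁ S₂ x = (∑ x ∈ S₁, k x + ∑ x ∈ S₂, k x) / 2 := by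
  rw [← sum_mul_ind hS₁, ← sum_mul_ind hS₂, ← sum_add_distrib, sum_div]
  exact sum_congr rfl fun x _ => by simp only [avgInd]; ring

lemma flowCost_avgInd_erase (hS₁ : S₁ ⊆ E) (hS₂ : S₂ ⊆ E) (he₁ : e ∈ S₁) (he₂ : drev e ∈ S₂) :
    flowCost E w (avgInd (S₁.erase e) (S₂.erase (drev e))) =
      (flowCost E w (ind S₁) + flowCost E w (ind S₂) - (w e + w (drev e))) / 2 := by
  simp only [flowCost]
  rw [sum_mul_avgInd ((erase_subset _ _).trans hS₁) ((erase_subset _ _).trans hS₂),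
    sum_erase_eq_sub he₁, sum_erase_eq_sub he₂, sum_mul_ind hS₁, sum_mul_ind hS₂]
  ring

end Incidence

section Flow

variable [Fintype V] [DecidableEq V] {E D D' S S₁ S₂ : Finset (V × V)} {d : V → ℤ}
  {f : V × V → ℝ} {e : V × V}

lemma netFlow_eq_sum_incidence (E : Finset (V × V)) (f : V × V → ℝ) (u : V) :
    ((univ.filter fun v : V => (u, v) ∈ E).sum fun v => f (u, v)) -
      ((univ.filter fun v : V => (v, u) ∈ E).sum fun v => f (v, u)) =
      ∑ x ∈ E, incidence x u * f x := by
  have hout : ((univ.filter fun v : V => (u, v) ∈ E).sum fun v => f (u, v)) =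
      ∑ x ∈ E with x.1 = u, f x :=
    sum_nbij' (fun v => (u, v)) Prod.snd (by simp) (by aesop) (by simp) (by aesop) (by simp)
  have hin : ((univ.filter fun v : V => (v, u) ∈ E).sum fun v => f (v, u)) =
      ∑ x ∈ E with x.2 = u, f x :=
    sum_nbij' (fun v => (v, u)) Prod.fst (by simp) (by aesop) (by simp) (by aesop) (by simp)
  rw [hout, hin, sum_filter, sum_filter, ← sum_sub_distrib]
  refine sum_congr rfl fun x _ => ?_
  simp only [incidence]
  split_ifs <;> ring

lemma isFlow_iff : IsFlow E D d f ↔ (∀ x ∈ E, 0 ≤ f x ∧ f x ≤ 1) ∧ (∀ x, x ∉ D → f x = 0) ∧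
    ∀ u, ∑ x ∈ E, incidence x u * f x = d u := by
  simp only [IsFlow, netFlow_eq_sum_incidence]

lemma IsFlow.mono (h : IsFlow E D d f) (hD : D ⊆ D') : IsFlow E D' d f :=
  ⟨h.1, fun x hx => h.2.1 x fun hxD => hx (hD hxD), h.2.2⟩

lemma IsFlow.ind_of_subset (h : IsFlow E D d (ind S)) (hS : S ⊆ D') : IsFlow E D' d (ind S) :=
  ⟨h.1, fun _ hx => if_neg fun hxS => hx (hS hxS), h.2.2⟩

/-- The function `avgInd (S₁.erase e) (S₂.erase (drev e))` is the average of `ind S₁` and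
`ind S₂` minus half a unit on the two-cycle `e, drev e`, which carries no net flow. -/
lemma isFlow_avgInd_erase {D₁ D₂ : Finset (V × V)} (hS₁ : S₁ ⊆ E) (hS₂ : S₂ ⊆ E)
    (h₁ : IsFlow E D₁ d (ind S₁)) (h₂ : IsFlow E D₂ d (ind S₂))
    (he₁ : e ∈ S₁) (he₂ : drev e ∈ S₂) :
    IsFlow E (S₁.erase e ∪ S₂.erase (drev e)) d (avgInd (S₁.erase e) (S₂.erase (drev e))) := by
  rw [isFlow_iff] at h₁ h₂ ⊢
  refine ⟨fun _ _ => ?_, fun x hx => ?_, fun u => ?_⟩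
  · simp only [avgInd, ind]
    constructor <;> split_ifs <;> norm_num
  · simp only [mem_union, not_or] at hx
    simp [avgInd, ind, hx.1, hx.2]
  · rw [sum_mul_avgInd ((erase_subset _ _).trans hS₁) ((erase_subset _ _).trans hS₂),
      sum_erase_eq_sub he₁, sum_erase_eq_sub he₂, ← sum_mul_ind hS₁, ← sum_mul_ind hS₂,
      h₁.2.2 u, h₂.2.2 u, incidence_drev]
    ring

lemma AEq.symm {A : Finset (V × V) → Finset (V × V)} (h : AEq E d A D D') : AEq E d A D' D :=
  ⟨h.2.1, h.1, h.2.2.symm⟩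

end Flow

namespace GoodA

variable [Fintype V] [DecidableEq V] {E X Y D S₁ S₂ : Finset (V × V)} {d : V → ℤ}
  {w : V × V → ℝ} {A : Finset (V × V) → Finset (V × V)} {e a : V × V}

lemma isFlow (hA : GoodA E d w A) (hX : X ⊆ E) (hXf : AdmitsFlow E X d) :
    IsFlow E X d (ind (A X)) :=
  (hA X hX hXf).1.1

lemma cost_le (hA : GoodA E d w A) (hX : X ⊆ E) (hXf : AdmitsFlow E X d) {g : V × V → ℝ}
    (hg : IsFlow E X d g) : flowCost E w (ind (A X)) ≤ flowCost E w g :=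
  (hA X hX hXf).1.2 g hg

lemma subset (hA : GoodA E d w A) (hX : X ⊆ E) (hXf : AdmitsFlow E X d) : A X ⊆ X := by
  intro x hx
  by_contra hxX
  simpa [ind, hx] using (hA.isFlow hX hXf).2.1 x hxX

lemma admitsFlow_of_subset (hA : GoodA E d w A) (hX : X ⊆ E) (hXf : AdmitsFlow E X d)
    (hXY : A X ⊆ Y) : AdmitsFlow E Y d :=
  ⟨_, (hA.isFlow hX hXf).ind_of_subset hXY⟩

/-- If each of `A X`, `A Y` is feasible for the other set, then each is at least as cheap as
the other, and uniqueness of the min-cost flow forces `A X = A Y`. -/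
lemma aeq_of_subset (hA : GoodA E d w A) (hX : X ⊆ E) (hY : Y ⊆ E) (hXf : AdmitsFlow E X d)
    (hXY : A X ⊆ Y) (hYX : A Y ⊆ X) : AEq E d A X Y := by
  have hYf := hA.admitsFlow_of_subset hX hXf hXY
  have hXonY := (hA.isFlow hX hXf).ind_of_subset hXY
  have hcost := hA.cost_le hX hXf ((hA.isFlow hY hYf).ind_of_subset hYX)
  have hmin : IsMinCostFlow E Y d w (ind (A X)) :=
    ⟨hXonY, fun g hg => hcost.trans (hA.cost_le hY hYf hg)⟩
  exact ⟨hXf, hYf, ind_injective ((hA Y hY hYf).2 _ hmin)⟩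

lemma two_mul_cost_lt (hA : GoodA E d w A) (hw : ∀ x ∈ E, 0 < w x) (hD : D ⊆ E)
    (hDf : AdmitsFlow E D d) {D₁ D₂ : Finset (V × V)} (hS₁ : S₁ ⊆ E) (hS₂ : S₂ ⊆ E)
    (h₁ : IsFlow E D₁ d (ind S₁)) (h₂ : IsFlow E D₂ d (ind S₂))
    (he₁ : e ∈ S₁) (he₂ : drev e ∈ S₂) (hsub : S₁.erase e ∪ S₂.erase (drev e) ⊆ D) :
    2 * flowCost E w (ind (A D)) < flowCost E w (ind S₁) + flowCost E w (ind S₂) := by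
  have hle := hA.cost_le hD hDf ((isFlow_avgInd_erase hS₁ hS₂ h₁ h₂ he₁ he₂).mono hsub)
  rw [flowCost_avgInd_erase hS₁ hS₂ he₁ he₂] at hle
  linarith [hw e (hS₁ he₁), hw (drev e) (hS₂ he₂)]

lemma drev_notMem_of_mem (hA : GoodA E d w A) (hw : ∀ x ∈ E, 0 < w x) (hD : D ⊆ E)
    (hDf : AdmitsFlow E D d) (h₁ : e ∈ A D) : drev e ∉ A D := by
  intro h₂
  have hAD := hA.subset hD hDf
  have hsub : (A D).erase e ∪ (A D).erase (drev e) ⊆ D :=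
    union_subset ((erase_subset _ _).trans hAD) ((erase_subset _ _).trans hAD)
  have := hA.two_mul_cost_lt hw hD hDf (hAD.trans hD) (hAD.trans hD) (hA.isFlow hD hDf)
    (hA.isFlow hD hDf) h₁ h₂ hsub
  linarith

lemma aeq_oplus_of_mem (hA : GoodA E d w A) (hD : D ⊆ E) (hDf : AdmitsFlow E D d) (ha : a ∈ E)
    (h₁ : a ∈ A D) (h₂ : drev a ∉ A D) : AEq E d A D (oplus D a) := by
  have hAD : A D ⊆ oplus D a := subset_oplus (hA.subset hD hDf) h₂
  have hDa := oplus_subset hD ha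
  have hAa := hA.subset hDa (hA.admitsFlow_of_subset hD hDf hAD)
  exact hA.aeq_of_subset hD hDa hDf hAD (hAa.trans (oplus_subset_of_mem (hA.subset hD hDf h₁)))

lemma mem_oplus_of_not_aeq (hA : GoodA E d w A) (hD : D ⊆ E) (hDf : AdmitsFlow E D d)
    (ha : a ∈ E) (hAD : A D ⊆ oplus D a) (hn : ¬ AEq E d A D (oplus D a)) :
    a ∈ A (oplus D a) := by
  by_contra hna
  have hsub := hA.subset (oplus_subset hD ha) (hA.admitsFlow_of_subset hD hDf hAD)
  refine hn (hA.aeq_of_subset hD (oplus_subset hD ha) hDf hAD fun x hx => ?_)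
  exact erase_oplus_subset (mem_erase.mpr ⟨fun hxa => hna (by subst hxa; exact hx), hsub hx⟩)

lemma aeq_oplus_or_aeq_oplus_drev (hA : GoodA E d w A) (hw : ∀ x ∈ E, 0 < w x)
    (hD : D ⊆ E) (hDf : AdmitsFlow E D d) (he : e ∈ E) (hre : drev e ∈ E) :
    AEq E d A D (oplus D e) ∨ AEq E d A D (oplus D (drev e)) := by
  have hAD := hA.subset hD hDf
  by_cases h₁ : e ∈ A D
  · exact Or.inl (hA.aeq_oplus_of_mem hD hDf he h₁ (hA.drev_notMem_of_mem hw hD hDf h₁))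
  by_cases h₂ : drev e ∈ A D
  · exact Or.inr (hA.aeq_oplus_of_mem hD hDf hre h₂ (by rwa [drev_drev]))
  by_contra! hn
  have hAD₁ : A D ⊆ oplus D e := subset_oplus hAD h₂
  have hAD₂ : A D ⊆ oplus D (drev e) := subset_oplus hAD (by rwa [drev_drev])
  have hf₁ := hA.admitsFlow_of_subset hD hDf hAD₁
  have hf₂ := hA.admitsFlow_of_subset hD hDf hAD₂
  have hD₁ := oplus_subset hD he
  have hD₂ := oplus_subset hD hre
  have hsub : (A (oplus D e)).erase e ∪ (A (oplus D (drev e))).erase (drev e) ⊆ D :=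
    union_subset ((erase_subset_erase _ (hA.subset hD₁ hf₁)).trans erase_oplus_subset)
      ((erase_subset_erase _ (hA.subset hD₂ hf₂)).trans erase_oplus_subset)
  have hlt := hA.two_mul_cost_lt hw hD hDf ((hA.subset hD₁ hf₁).trans hD₁)
    ((hA.subset hD₂ hf₂).trans hD₂) (hA.isFlow hD₁ hf₁) (hA.isFlow hD₂ hf₂)
    (hA.mem_oplus_of_not_aeq hD hDf he hAD₁ hn.1) (hA.mem_oplus_of_not_aeq hD hDf hre hAD₂ hn.2)
    hsub
  linarith [hA.cost_le hD₁ hf₁ ((hA.isFlow hD hDf).ind_of_subset hAD₁),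
    hA.cost_le hD₂ hf₂ ((hA.isFlow hD hDf).ind_of_subset hAD₂)]

end GoodA

lemma chi_eq_or [DecidableEq V] (E' : Finset (V × V)) (e : V × V) :
    chi E' e = e ∨ chi E' e = drev e := by
  unfold chi
  split_ifs
  exacts [Or.inl rfl, Or.inr rfl]

lemma phiE_eq_oplus_or [Fintype V] [DecidableEq V] {E D E' : Finset (V × V)} {d : V → ℤ}
    {A : Finset (V × V) → Finset (V × V)} {e : V × V}
    (key : AEq E d A D (oplus D e) ∨ AEq E d A D (oplus D (drev e))) :
    (phiE E d A E' e D = oplus D e ∧ AEq E d A D (oplus D e)) ∨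
      (phiE E d A E' e D = oplus D (drev e) ∧ AEq E d A D (oplus D (drev e))) := by
  unfold phiE
  split_ifs with h₁ h₂
  · rcases chi_eq_or E' e with hc | hc <;> rw [hc]
    exacts [Or.inl ⟨rfl, h₁⟩, Or.inr ⟨rfl, h₂⟩]
  · rcases chi_eq_or E' e with hc | hc <;> rw [hc]
    exacts [Or.inr ⟨rfl, h₂⟩, Or.inl ⟨rfl, h₁⟩]
  · exact Or.inl ⟨rfl, h₁⟩
  · exact Or.inr ⟨rfl, key.resolve_left h₁⟩

end

theorem phiE_well_defined_general
    {V : Type*} [Fintype V] [DecidableEq V]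
    (E : Finset (V × V)) (hE_symm : ∀ e, e ∈ E ↔ drev e ∈ E)
    (hE_ne : ∀ e ∈ E, e.1 ≠ e.2)
    (d : V → ℤ)
    (w : V × V → ℝ) (hw : ∀ e ∈ E, 0 < w e)
    (A : Finset (V × V) → Finset (V × V)) (hA : GoodA E d w A)
    (E' : Finset (V × V))
    (D : Finset (V × V)) (hD : D ⊆ E) (hDf : AdmitsFlow E D d)
    (e : V × V) (he : e ∈ E) :
    ¬ (¬ AEq E d A D (oplus D e) ∧ ¬ AEq E d A D (oplus D (drev e))) ∧
    AEq E d A (phiE E d A E' e D) D ∧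
    (e ∈ phiE E d A E' e D ↔ drev e ∉ phiE E d A E' e D) ∧
    psub (phiE E d A E' e D) e = psub D e := by
  have hed : e ≠ drev e := fun h => hE_ne e he (congrArg Prod.fst h)
  have key := hA.aeq_oplus_or_aeq_oplus_drev hw hD hDf he ((hE_symm e).1 he)
  refine ⟨fun h => key.elim h.1 h.2, ?_⟩
  rcases phiE_eq_oplus_or (E' := E') key with ⟨hφ, hAeq⟩ | ⟨hφ, hAeq⟩ <;> rw [hφ]
  · exact ⟨hAeq.symm, by simp [mem_oplus_self hed, drev_notMem_oplus], psub_oplus⟩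
  · have hmem : drev e ∈ oplus D (drev e) := mem_oplus_self (by simpa using hed.symm)
    have hnmem : e ∉ oplus D (drev e) := by simpa using drev_notMem_oplus (D := D) (a := drev e)
    exact ⟨hAeq.symm, by simp [hmem, hnmem], by rw [← psub_drev, psub_oplus, psub_drev]⟩

theorem phiE_well_defined
    {V : Type*} [Fintype V] [DecidableEq V]
    (E : Finset (V × V)) (hE_symm : ∀ e, e ∈ E ↔ drev e ∈ E)
    (hE_ne : ∀ e ∈ E, e.1 ≠ e.2)
    (d : V → ℤ) (hd : ∑ u : V, d u = 0)
    (w : V × V → ℝ) (hw : ∀ e ∈ E, 0 < w e)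
    (A : Finset (V × V) → Finset (V × V)) (hA : GoodA E d w A)
    (E' : Finset (V × V)) (hE' : IsOrientation E E')
    (D : Finset (V × V)) (hD : D ⊆ E) (hDf : AdmitsFlow E D d)
    (e : V × V) (he : e ∈ E) :
    ¬ (¬ AEq E d A D (oplus D e) ∧ ¬ AEq E d A D (oplus D (drev e))) ∧
    AEq E d A (phiE E d A E' e D) D ∧
    (e ∈ phiE E d A E' e D ↔ drev e ∉ phiE E d A E' e D) ∧
    psub (phiE E d A E' e D) e = psub D e :=
  phiE_well_defined_general E hE_symm hE_ne d w hw A hA E' D hD hDf e he
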